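/- Let ℛ and 𝒮 be linear growing TRSs over 𝓕 and let 𝒟'(ℛ,𝒮) be the powerset-pair automaton built from 𝒞'_{RS_{𝒮°}}(ℛ). For every s ∈ 𝒯(𝓕): if s →_{Γ_{𝒟'}}* [S,P] then for every redex position p of s there exists a state q ∈ P with q ∈ s[(s|_p)°]_p↓. -/

import Mathlib

set_option maxHeartbeats 1000000

/-! ## Terms over a signature -/

/-- Terms over a signature given by a type `F` of function symbols together with
an arity function `ar`; variables are natural numbers. -/
inductive Term (F : Type) (ar : F → ℕ) : Type
  | var : ℕ → Term F ar
  | app : (f : F) → (Fin (ar f) → Term F ar) → Term F ar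

namespace Term

variable {F : Type} {ar : F → ℕ}

/-- The (finite) set of variables of a term. -/
def vars : Term F ar → Finset ℕ
  | var n => {n}
  | app _ ts => Finset.univ.biUnion fun i => (ts i).vars

/-- A term is ground if it contains no variables. -/
def Ground (t : Term F ar) : Prop := t.vars = ∅

/-- The number of occurrences of the variable `n` in a term. -/
def count (n : ℕ) : Term F ar → ℕ
  | var m => if m = n then 1 else 0
  | app _ ts => ∑ i, (ts i).count n

/-- A term is linear if no variable occurs twice in it. -/
def Linear (t : Term F ar) : Prop := ∀ n, t.count n ≤ 1

/-- Applying a substitution to a term. -/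
def subst (σ : ℕ → Term F ar) : Term F ar → Term F ar
  | var n => σ n
  | app f ts => app f fun i => (ts i).subst σ

/-- The subterm at a position (a list of argument indices), if the position is valid. -/
def subtermAt : Term F ar → List ℕ → Option (Term F ar)
  | t, [] => some t
  | var _, _ :: _ => none
  | app f ts, i :: p => if h : i < ar f then (ts ⟨i, h⟩).subtermAt p else none

/-- Replacing the subterm at a position, if the position is valid. -/
def replaceAt : Term F ar → List ℕ → Term F ar → Option (Term F ar)
  | _, [], u => some u
  | var _, _ :: _, _ => none
  | app f ts, i :: p, u =>
      if h : i < ar f then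
        ((ts ⟨i, h⟩).replaceAt p u).map fun s => app f (Function.update ts ⟨i, h⟩ s)
      else none

/-- `s.IsSubtermOf t` : `s` is a subterm of `t`. -/
def IsSubtermOf (s t : Term F ar) : Prop := ∃ p, t.subtermAt p = some s

/-- Relabelling of function symbols along an arity-preserving map of signatures. -/
def relabel {G : Type} {arG : G → ℕ} (φ : F → G) (h : ∀ f, arG (φ f) = ar f) :
    Term F ar → Term G arG
  | var n => var n
  | app f ts => app (φ f) fun i => (ts (Fin.cast (h f) i)).relabel φ h

end Term

/-! ## Rewriting -/

/-- One-step rewriting with a set of rewrite rules: there are a position `p` of `s`,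
a rule `(l, r)` and a substitution `σ` with `s|_p = lσ` and `t = s[rσ]_p`. -/
def Rewrites {F : Type} {ar : F → ℕ} (R : Set (Term F ar × Term F ar))
    (s t : Term F ar) : Prop :=
  ∃ (p : List ℕ) (l r : Term F ar) (σ : ℕ → Term F ar),
    (l, r) ∈ R ∧ s.subtermAt p = some (l.subst σ) ∧ s.replaceAt p (r.subst σ) = some t

/-- Many-step rewriting (reflexive–transitive closure). -/
abbrev RewritesStar {F : Type} {ar : F → ℕ} (R : Set (Term F ar × Term F ar)) :
    Term F ar → Term F ar → Prop :=
  Relation.ReflTransGen (Rewrites R)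

/-- A term rewriting system: a finite set of rules whose left-hand sides are not variables. -/
structure TRS (F : Type) (ar : F → ℕ) where
  rules : Set (Term F ar × Term F ar)
  finite : rules.Finite
  lhs_not_var : ∀ lr ∈ rules, ∀ n, lr.1 ≠ Term.var n

namespace TRS

variable {F : Type} {ar : F → ℕ}

def LeftLinear (R : TRS F ar) : Prop := ∀ lr ∈ R.rules, lr.1.Linear

def RightLinear (R : TRS F ar) : Prop := ∀ lr ∈ R.rules, lr.2.Linear

/-- A TRS is linear if all left- and right-hand sides are linear terms. -/
def IsLinear (R : TRS F ar) : Prop := R.LeftLinear ∧ R.RightLinear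

/-- A TRS is growing if every variable occurring both in the left- and the right-hand
side of a rule occurs at depth 1 in the left-hand side. -/
def Growing (R : TRS F ar) : Prop :=
  ∀ lr ∈ R.rules, ∀ n ∈ lr.1.vars, n ∈ lr.2.vars →
    ∀ (f : F) (ts : Fin (ar f) → Term F ar), lr.1 = Term.app f ts →
      ∀ i, n ∈ (ts i).vars → ts i = Term.var n

/-- A redex is an instance of a left-hand side. -/
def IsRedex (R : TRS F ar) (s : Term F ar) : Prop :=
  ∃ lr ∈ R.rules, ∃ σ : ℕ → Term F ar, s = lr.1.subst σ

/-- `p` is a redex position of `s`. -/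
def RedexPos (R : TRS F ar) (s : Term F ar) (p : List ℕ) : Prop :=
  ∃ u, s.subtermAt p = some u ∧ R.IsRedex u

def Reducible (R : TRS F ar) (s : Term F ar) : Prop := ∃ p, R.RedexPos s p

/-- A term is root-stable if it cannot be rewritten to a redex. -/
def RootStable (R : TRS F ar) (s : Term F ar) : Prop :=
  ¬ ∃ t, RewritesStar R.rules s t ∧ R.IsRedex t

/-- Ground normal forms. -/
def NFset (R : TRS F ar) : Set (Term F ar) := { t | t.Ground ∧ ¬ R.Reducible t }

/-- Ground redexes. -/
def RedexSet (R : TRS F ar) : Set (Term F ar) := { t | t.Ground ∧ R.IsRedex t }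

/-- Root-stable ground terms. -/
def RSset (R : TRS F ar) : Set (Term F ar) := { t | t.Ground ∧ R.RootStable t }

/-- Relabelling a TRS along an arity-preserving map of signatures. -/
def relabel {G : Type} {arG : G → ℕ} (R : TRS F ar) (φ : F → G)
    (h : ∀ f, arG (φ f) = ar f) : TRS G arG where
  rules := (fun lr => (lr.1.relabel φ h, lr.2.relabel φ h)) '' R.rules
  finite := R.finite.image _
  lhs_not_var := by
    rintro lr ⟨lr0, h0, rfl⟩ n hn
    dsimp only at hn
    cases h1 : lr0.1 with
    | var m => exact absurd h1 (R.lhs_not_var lr0 h0 m)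
    | app f ts =>
        rw [h1] at hn
        simp only [Term.relabel] at hn
        cases hn

end TRS

/-! ## Tree automata -/

/-- A transition rule `f(q₁,…,qₙ) → q` of a bottom-up tree automaton. -/
abbrev TARule (F : Type) (ar : F → ℕ) (Q : Type) : Type :=
  (f : F) × ((Fin (ar f) → Q) × Q)

/-- A (finite bottom-up) tree automaton without ε-transitions. -/
structure TreeAutomaton (F : Type) (ar : F → ℕ) (Q : Type) where
  trans : Set (TARule F ar Q)
  final : Set Q

/-- `Reaches Δ t q` : the ground term `t` rewrites to the state `q` using the
transition rules `Δ`. -/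
inductive Reaches {F : Type} {ar : F → ℕ} {Q : Type} (Δ : Set (TARule F ar Q)) :
    Term F ar → Q → Prop
  | app {f : F} {ts : Fin (ar f) → Term F ar} {qs : Fin (ar f) → Q} {q : Q} :
      (∀ i, Reaches Δ (ts i) (qs i)) → (⟨f, qs, q⟩ : TARule F ar Q) ∈ Δ →
      Reaches Δ (Term.app f ts) q

/-- `ReachesT Δ θ t q` : the term `t`, whose variables are interpreted as the states
given by `θ`, rewrites to the state `q` using the transition rules `Δ`. -/
inductive ReachesT {F : Type} {ar : F → ℕ} {Q : Type} (Δ : Set (TARule F ar Q))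
    (θ : ℕ → Q) : Term F ar → Q → Prop
  | var (n : ℕ) : ReachesT Δ θ (Term.var n) (θ n)
  | app {f : F} {ts : Fin (ar f) → Term F ar} {qs : Fin (ar f) → Q} {q : Q} :
      (∀ i, ReachesT Δ θ (ts i) (qs i)) → (⟨f, qs, q⟩ : TARule F ar Q) ∈ Δ →
      ReachesT Δ θ (Term.app f ts) q

/-- The language of a tree automaton: all ground terms reaching a final state. -/
def Lang {F : Type} {ar : F → ℕ} {Q : Type} (A : TreeAutomaton F ar Q) :
    Set (Term F ar) :=
  { t | t.Ground ∧ ∃ q ∈ A.final, Reaches A.trans t q }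

/-- A set of ground terms is recognizable if it is the language of some finite
tree automaton. -/
def Recognizable {F : Type} {ar : F → ℕ} (T : Set (Term F ar)) : Prop :=
  ∃ (Q : Type) (_ : Fintype Q) (A : TreeAutomaton F ar Q), T = Lang A

/-- The set of states occurring in a set of transition rules. -/
def statesOf {F : Type} {ar : F → ℕ} {Q : Type} (Γ : Set (TARule F ar Q)) : Set Q :=
  { q | ∃ ρ ∈ Γ, ρ.2.2 = q ∨ ∃ i, ρ.2.1 i = q }

/-! ## The automaton `ℬ(ℛ)` -/

/-- The canonical representative of the state `⟨t⟩` of `ℬ(ℛ)`: all variables are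
identified with the single state `⟨x⟩`, represented by `var 0`. -/
def stPattern {F : Type} {ar : F → ℕ} : Term F ar → Term F ar
  | Term.var _ => Term.var 0
  | Term.app f ts => Term.app f ts

/-- `S_ℛ`: the set of all subterms of arguments of left-hand sides of `ℛ`. -/
def SR {F : Type} {ar : F → ℕ} (R : TRS F ar) : Set (Term F ar) :=
  { s | ∃ lr ∈ R.rules, ∃ (f : F) (ts : Fin (ar f) → Term F ar),
        lr.1 = Term.app f ts ∧ ∃ i, s.IsSubtermOf (ts i) }

/-- The representatives of the states of `ℬ(ℛ)`: the patterns of terms of `S_ℛ`,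
together with `⟨x⟩`. -/
def BStateSet {F : Type} {ar : F → ℕ} (R : TRS F ar) : Set (Term F ar) :=
  stPattern '' SR R ∪ {Term.var 0}

/-- The matching rules of `ℬ(ℛ)` (with states encoded by `enc`):
`f(⟨t₁⟩,…,⟨tₙ⟩) → ⟨t⟩` for every `t = f(t₁,…,tₙ) ∈ S_ℛ`. -/
def BMatch {F : Type} {ar : F → ℕ} {Q : Type} (R : TRS F ar) (enc : Term F ar → Q) :
    Set (TARule F ar Q) :=
  { ρ | ∃ (f : F) (ts : Fin (ar f) → Term F ar), Term.app f ts ∈ SR R ∧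
        ρ = ⟨f, fun i => enc (stPattern (ts i)), enc (Term.app f ts)⟩ }

/-- The propagation rules `f(⟨x⟩,…,⟨x⟩) → ⟨x⟩` for every function symbol `f`. -/
def BProp {F : Type} {ar : F → ℕ} {Q : Type} (enc : Term F ar → Q) :
    Set (TARule F ar Q) :=
  { ρ | ∃ f : F, ρ = ⟨f, fun _ => enc (Term.var 0), enc (Term.var 0)⟩ }

/-- The transition rules of the automaton `ℬ(ℛ)`. -/
def BTrans {F : Type} {ar : F → ℕ} {Q : Type} (R : TRS F ar) (enc : Term F ar → Q) :
    Set (TARule F ar Q) :=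
  BMatch R enc ∪ BProp enc

/-- `Σ(t)`: the set of ground instances of the term `t`. -/
def GInst {F : Type} {ar : F → ℕ} (t : Term F ar) : Set (Term F ar) :=
  { s | s.Ground ∧ ∃ σ, s = t.subst σ }

/-! ## Saturation -/

/-- The state `qᵢ` associated to the argument `lᵢ` of a left-hand side in the
saturation rule: `lᵢθ` if `lᵢ` is a variable occurring in `r` (whose variable set
is `rv`), and `⟨lᵢ⟩` otherwise. -/
def satArg {F : Type} {ar : F → ℕ} {Q : Type} (enc : Term F ar → Q) (θ : ℕ → Q)
    (rv : Finset ℕ) : Term F ar → Q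
  | Term.var n => if n ∈ rv then θ n else enc (Term.var 0)
  | Term.app f ts => enc (Term.app f ts)

/-- One step of the saturation process: add all transition rules `f(q₁,…,qₙ) → q`
obtained from a rewrite rule `f(l₁,…,lₙ) → r` and a state substitution `θ`
(with values among the states `Qc` of the automaton) such that `rθ →_Γ* q`. -/
def satStep {F : Type} {ar : F → ℕ} {Q : Type} (R : TRS F ar) (enc : Term F ar → Q)
    (Qc : Set Q) (Γ : Set (TARule F ar Q)) : Set (TARule F ar Q) :=
  Γ ∪ { ρ | ∃ (f : F) (ls : Fin (ar f) → Term F ar) (r : Term F ar) (θ : ℕ → Q) (q : Q),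
        (Term.app f ls, r) ∈ R.rules ∧ (∀ n ∈ r.vars, θ n ∈ Qc) ∧ ReachesT Γ θ r q ∧
        ρ = ⟨f, fun i => satArg enc θ r.vars (ls i), q⟩ }

/-- The saturated set of transition rules: the closure of `Γ0` under the saturation
inference rule. -/
def satGamma {F : Type} {ar : F → ℕ} {Q : Type} (R : TRS F ar) (enc : Term F ar → Q)
    (Qc : Set Q) (Γ0 : Set (TARule F ar Q)) : Set (TARule F ar Q) :=
  ⋃ n, (satStep R enc Qc)^[n] Γ0

/-! ## The automaton `𝒞_T(ℛ)` and its extension `𝒞'_T(ℛ)` -/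

/-- The data of the construction of the automaton `𝒞_T(ℛ)`: an automaton `𝒜_T`
recognizing `T` with all states accessible and state set `QA`, together with an
encoding `enc` of the states `⟨t⟩` of `ℬ(ℛ)` into the common state type `Q`, such
that every state common to `𝒜_T` and `ℬ(ℛ)` accepts the same set of terms in both
automata. -/
structure CSetup {G : Type} [Fintype G] {arG : G → ℕ} (Q : Type) [Fintype Q]
    (Rg : TRS G arG) (T : Set (Term G arG)) where
  enc : Term G arG → Q
  A : TreeAutomaton G arG Q
  QA : Set Q
  henc : Set.InjOn enc (BStateSet Rg)
  hAstates : ∀ ρ ∈ A.trans, ρ.2.2 ∈ QA ∧ ∀ i, ρ.2.1 i ∈ QA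
  hfinal : A.final ⊆ QA
  hacc : ∀ q ∈ QA, ∃ s : Term G arG, s.Ground ∧ Reaches A.trans s q
  hground : ∃ s : Term G arG, s.Ground
  hshared : ∀ q ∈ QA ∩ enc '' BStateSet Rg, ∀ s : Term G arG,
      Reaches A.trans s q ↔ Reaches (BTrans Rg enc) s q
  hT : T = Lang A

namespace CSetup

variable {G : Type} [Fintype G] {arG : G → ℕ} {Q : Type} [Fintype Q]
  {Rg : TRS G arG} {T : Set (Term G arG)}

/-- The set of states of the automaton `𝒞_T(ℛ)`. -/
def Qstates (C : CSetup Q Rg T) : Set Q := C.QA ∪ C.enc '' BStateSet Rg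

/-- The transition rules of `𝒞_T(ℛ)` before saturation: the union of `𝒜_T` and `ℬ(ℛ)`. -/
def Γ0 (C : CSetup Q Rg T) : Set (TARule G arG Q) := C.A.trans ∪ BTrans Rg C.enc

/-- The transition rules of `𝒞_T(ℛ)` after saturation. -/
def Γsat (C : CSetup Q Rg T) : Set (TARule G arG Q) :=
  satGamma Rg C.enc C.Qstates C.Γ0

end CSetup

/-- The redex rules `f(⟪l₁⟫,…,⟪lₙ⟫) → q_r` for every left-hand side `f(l₁,…,lₙ)`. -/
def RedexRules {F : Type} {ar : F → ℕ} {Q : Type} (R : TRS F ar)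
    (enc2 : Term F ar → Q) (qr : Q) : Set (TARule F ar Q) :=
  { ρ | ∃ (f : F) (ls : Fin (ar f) → Term F ar) (r : Term F ar),
        (Term.app f ls, r) ∈ R.rules ∧
        ρ = ⟨f, fun i => enc2 (stPattern (ls i)), qr⟩ }

/-- The rules `f(⟨x⟩,…,q_r,…,⟨x⟩) → q_r`. -/
def QrProp {F : Type} {ar : F → ℕ} {Q : Type} (enc : Term F ar → Q) (qr : Q) :
    Set (TARule F ar Q) :=
  { ρ | ∃ (f : F) (j : Fin (ar f)),
        ρ = ⟨f, fun i => if i = j then qr else enc (Term.var 0), qr⟩ }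

/-- The data of the construction of the automaton `𝒞'_T(ℛ)`: `𝒞_T(ℛ)` extended with
a fresh copy `⟪t⟫` (encoded by `enc2`, with `⟪x⟫ = ⟨x⟩`) of the states of `ℬ(ℛ)` and
a fresh state `q_r`. -/
structure CpSetup {G : Type} [Fintype G] {arG : G → ℕ} (Q : Type) [Fintype Q]
    (Rg : TRS G arG) (T : Set (Term G arG)) extends CSetup Q Rg T where
  enc2 : Term G arG → Q
  qr : Q
  henc2 : Set.InjOn enc2 (BStateSet Rg)
  hx : enc2 (Term.var 0) = enc (Term.var 0)
  hfresh : (enc2 '' (BStateSet Rg \ {Term.var 0}) ∪ {qr}) ∩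
              (QA ∪ enc '' BStateSet Rg) = ∅
  hqr : qr ∉ enc2 '' (BStateSet Rg \ {Term.var 0})

namespace CpSetup

variable {G : Type} [Fintype G] {arG : G → ℕ} {Q : Type} [Fintype Q]
  {Rg : TRS G arG} {T : Set (Term G arG)}

/-- The transition rules `Γ'` of the automaton `𝒞'_T(ℛ)`. -/
def Γ' (C : CpSetup Q Rg T) : Set (TARule G arG Q) :=
  C.toCSetup.Γsat ∪ BMatch Rg C.enc2 ∪ RedexRules Rg C.enc2 C.qr ∪ QrProp C.enc C.qr

end CpSetup

/-! ## The signature `𝓖 = 𝓕 ∪ {•}` -/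

/-- The arity function of the extended signature `𝓕 ∪ {•}` (with `•` the fresh
constant `none`). -/
def arB {F : Type} (ar : F → ℕ) : Option F → ℕ
  | none => 0
  | some f => ar f

/-- The term `•`. -/
def bulletTm {F : Type} {ar : F → ℕ} : Term (Option F) (arB ar) :=
  Term.app none Fin.elim0

/-- The embedding of `𝒯(𝓕)`-terms into terms over `𝓕 ∪ {•}`. -/
def liftB {F : Type} {ar : F → ℕ} : Term F ar → Term (Option F) (arB ar) :=
  Term.relabel some (fun _ => rfl)

/-- A TRS over `𝓕` viewed as a TRS over `𝓕 ∪ {•}`. -/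
def TRS.liftB {F : Type} {ar : F → ℕ} (R : TRS F ar) : TRS (Option F) (arB ar) :=
  R.relabel some (fun _ => rfl)

/-- The TRS `ℛ• = ℛ ∪ {• → •}` over the signature `𝓕 ∪ {•}`. -/
def TRS.bullet {F : Type} {ar : F → ℕ} (R : TRS F ar) : TRS (Option F) (arB ar) where
  rules := R.liftB.rules ∪ {(bulletTm, bulletTm)}
  finite := R.liftB.finite.union (Set.finite_singleton _)
  lhs_not_var := by
    rintro lr (h | h) n hn
    · exact R.liftB.lhs_not_var lr h n hn
    · rw [Set.mem_singleton_iff] at h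
      rw [h] at hn
      cases hn

/-! ## The automaton `𝒟(ℛ)` -/

/-- For a symbol `g` and sets of states `Ss` for the arguments, the set
`g(S₁,…,Sₙ)↓` of states reachable from `g` applied to states chosen from the `Ssᵢ`. -/
def oneStep {G : Type} {arG : G → ℕ} {Q : Type} (Γ : Set (TARule G arG Q)) (g : G)
    (Ss : Fin (arG g) → Set Q) : Set Q :=
  { q | ∃ qs : Fin (arG g) → Q, (∀ i, qs i ∈ Ss i) ∧ (⟨g, qs, q⟩ : TARule G arG Q) ∈ Γ }

/-- `t↓` for a ground term `t`: the set of states reachable from `t`. -/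
def dn {G : Type} {arG : G → ℕ} {Q : Type} (Γ : Set (TARule G arG Q))
    (t : Term G arG) : Set Q :=
  { q | Reaches Γ t q }

/-- There is a rewrite rule with left-hand side `g(l₁,…,lₙ)` such that
`⟪lᵢ⟫ ∈ Ssᵢ` for all `i`. -/
def LhsMatch {G : Type} {arG : G → ℕ} {Q : Type} (Rg : TRS G arG)
    (enc2 : Term G arG → Q) (g : G) (Ss : Fin (arG g) → Set Q) : Prop :=
  ∃ (ls : Fin (arG g) → Term G arG) (r : Term G arG),
    (Term.app g ls, r) ∈ Rg.rules ∧ ∀ i, enc2 (stPattern (ls i)) ∈ Ss i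

/-- The transition rules of the automaton `𝒟(ℛ)` over `𝓕`, built from the transition
rules `Γ'` of `𝒞'_{NF}(ℛ)` over `𝓕 ∪ {•}`. -/
def DTrans {F : Type} {ar : F → ℕ} {Q : Type} (Rb : TRS (Option F) (arB ar))
    (Γ' : Set (TARule (Option F) (arB ar) Q))
    (enc enc2 : Term (Option F) (arB ar) → Q) :
    Set (TARule F ar (Set Q × Set Q)) :=
  { ρ | ∃ (f : F) (SP : Fin (ar f) → Set Q × Set Q) (P1 P2 : Set Q),
      P1 ⊆ (⋃ i : Fin (ar f), oneStep Γ' (some f)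
              (fun (j : Fin (ar f)) => if j = i then (SP j).2 else (SP j).1)) ∧
      (∀ (i : Fin (ar f)), ∀ q ∈ (SP i).2,
        (P1 ∩ oneStep Γ' (some f) (fun (j : Fin (ar f)) => if j = i then {q} else (SP j).1)).Nonempty) ∧
      ((LhsMatch Rb enc2 (some f) (fun i => (SP i).1) ∧ P2 = {enc (Term.var 0)}) ∨
       (¬ LhsMatch Rb enc2 (some f) (fun i => (SP i).1) ∧ P2 = (∅ : Set Q))) ∧
      ρ = ⟨f, SP, (oneStep Γ' (some f) (fun i => (SP i).1), P1 ∪ P2)⟩ }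

/-- The automaton `𝒟(ℛ)`: final states are the pairs `[S,P]` with `q_r ∈ S` and
`P ⊆ Q_f`. -/
def DAutomaton {F : Type} {ar : F → ℕ} {Q : Type} (Rb : TRS (Option F) (arB ar))
    (Γ' : Set (TARule (Option F) (arB ar) Q))
    (enc enc2 : Term (Option F) (arB ar) → Q) (qr : Q) (Qf : Set Q) :
    TreeAutomaton F ar (Set Q × Set Q) where
  trans := DTrans Rb Γ' enc enc2
  final := { SP | qr ∈ SP.1 ∧ SP.2 ⊆ Qf }

/-! ## Growing approximations -/

/-- `VarRepl t t'` : `t'` is obtained from `t` by replacing occurrences of variables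
by (possibly other) variables. -/
inductive VarRepl {F : Type} {ar : F → ℕ} : Term F ar → Term F ar → Prop
  | var (n m : ℕ) : VarRepl (Term.var n) (Term.var m)
  | app (f : F) (ts ts' : Fin (ar f) → Term F ar) :
      (∀ i, VarRepl (ts i) (ts' i)) → VarRepl (Term.app f ts) (Term.app f ts')

/-- `Rg` is a growing approximation of `R`: a right-linear growing TRS obtained from
`R` by replacing, in each right-hand side, occurrences of variables by variables not
occurring in the corresponding left-hand side. -/
def IsGrowingApprox {F : Type} {ar : F → ℕ} (R Rg : TRS F ar) : Prop :=
  Rg.RightLinear ∧ Rg.Growing ∧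
  (∀ lr ∈ Rg.rules, ∃ lr' ∈ R.rules, lr.1 = lr'.1 ∧ VarRepl lr'.2 lr.2 ∧
      ∀ n ∈ lr.2.vars, n ∉ lr.1.vars) ∧
  (∀ lr ∈ R.rules, ∃ lr' ∈ Rg.rules, lr.1 = lr'.1 ∧ VarRepl lr.2 lr'.2 ∧
      ∀ n ∈ lr'.2.vars, n ∉ lr'.1.vars)

/-! ## The signature `𝓖 = 𝓕 ∪ {f° : f ∈ 𝓕}` -/

/-- The arity function of the signature `𝓕 ∪ {f° : f ∈ 𝓕}` (`inl f` is `f`,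
`inr f` is `f°`). -/
def arC {F : Type} (ar : F → ℕ) : F ⊕ F → ℕ
  | Sum.inl f => ar f
  | Sum.inr f => ar f

/-- The embedding of `𝒯(𝓕)`-terms into terms over `𝓕 ∪ {f° : f ∈ 𝓕}`. -/
def liftC {F : Type} {ar : F → ℕ} : Term F ar → Term (F ⊕ F) (arC ar) :=
  Term.relabel Sum.inl (fun _ => rfl)

/-- `t°`: mark the root symbol of `t`. -/
def circTm {F : Type} {ar : F → ℕ} : Term F ar → Term (F ⊕ F) (arC ar)
  | Term.var n => Term.var n
  | Term.app f ts => Term.app (Sum.inr f) fun i => liftC (ts i)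

/-- A TRS over `𝓕` viewed as a TRS over `𝓕 ∪ {f° : f ∈ 𝓕}`. -/
def TRS.liftC {F : Type} {ar : F → ℕ} (R : TRS F ar) : TRS (F ⊕ F) (arC ar) :=
  R.relabel Sum.inl (fun _ => rfl)

/-- The TRS `𝒮° = 𝒮 ∪ {l° → r | l → r ∈ 𝒮}` over the signature `𝓕 ∪ {f° : f ∈ 𝓕}`. -/
def TRS.circ {F : Type} {ar : F → ℕ} (S : TRS F ar) : TRS (F ⊕ F) (arC ar) where
  rules := S.liftC.rules ∪ (fun lr => (circTm lr.1, _root_.liftC lr.2)) '' S.rules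
  finite := S.liftC.finite.union (S.finite.image _)
  lhs_not_var := by
    rintro lr (h | ⟨lr0, h0, rfl⟩) n hn
    · exact S.liftC.lhs_not_var lr h n hn
    · dsimp only at hn
      cases h1 : lr0.1 with
      | var m => exact absurd h1 (S.lhs_not_var lr0 h0 m)
      | app f ts =>
          rw [h1] at hn
          simp only [circTm] at hn
          cases hn

/-- The transitions added to `ℬ(𝒮°)` to obtain `𝒜_{REDEX_{𝒮°}}`:
`f(⟨l₁⟩,…,⟨lₙ⟩) → q_f` and `f°(⟨l₁⟩,…,⟨lₙ⟩) → q_f` for each left-hand side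
`f(l₁,…,lₙ)` of a rule of `𝒮`. -/
def CircRedexRules {F : Type} {ar : F → ℕ} {Q : Type} (S : TRS F ar)
    (enc : Term (F ⊕ F) (arC ar) → Q) (qf : Q) : Set (TARule (F ⊕ F) (arC ar) Q) :=
  { ρ | ∃ (f : F) (ls : Fin (ar f) → Term F ar) (r : Term F ar),
      (Term.app f ls, r) ∈ S.rules ∧
      (ρ = ⟨Sum.inl f, fun i => enc (stPattern (liftC (ls i))), qf⟩ ∨
       ρ = ⟨Sum.inr f, fun i => enc (stPattern (liftC (ls i))), qf⟩) }

/-! ## The automaton `𝒟'(ℛ,𝒮)` -/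

/-- The data of the construction of `𝒞'_{RS_{𝒮°}}(ℛ)`: the saturated automaton
`𝒞_{RS_{𝒮°}}(ℛ)`, a fresh copy `⟪t⟫` (encoded by `enc2`, with `⟪x⟫ = ⟨x⟩`) of the
states of `ℬ(ℛ)`, and an automaton `𝒞_{REDEX_𝒮}(𝒮)` (transitions `Etrans`, final
states `Qf'`) recognizing the non-`𝒮`-root-stable ground terms of `𝒯(𝓕)`. -/
structure CrsSetup {F : Type} [Fintype F] {ar : F → ℕ} (Q : Type) [Fintype Q]
    (R S : TRS F ar) extends CSetup Q R.liftC (TRS.RSset S.circ) where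
  enc2 : Term (F ⊕ F) (arC ar) → Q
  henc2 : Set.InjOn enc2 (BStateSet R.liftC)
  hx : enc2 (Term.var 0) = enc (Term.var 0)
  hfresh2 : (enc2 '' (BStateSet R.liftC \ {Term.var 0})) ∩
              (QA ∪ enc '' BStateSet R.liftC) = ∅
  Etrans : Set (TARule (F ⊕ F) (arC ar) Q)
  Qf' : Set Q
  hQf' : Qf' ⊆ statesOf Etrans
  hEfresh : statesOf Etrans ∩
      (QA ∪ enc '' BStateSet R.liftC ∪ enc2 '' (BStateSet R.liftC \ {Term.var 0})) = ∅
  hE : ∀ t : Term (F ⊕ F) (arC ar),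
      (t.Ground ∧ ∃ q ∈ Qf', Reaches Etrans t q) ↔
      (∃ s : Term F ar, t = liftC s ∧ s.Ground ∧ ¬ S.RootStable s)

namespace CrsSetup

variable {F : Type} [Fintype F] {ar : F → ℕ} {Q : Type} [Fintype Q] {R S : TRS F ar}

/-- The transition rules `Γ'` of the automaton `𝒞'_{RS_{𝒮°}}(ℛ)`. -/
def Γ' (C : CrsSetup Q R S) : Set (TARule (F ⊕ F) (arC ar) Q) :=
  C.toCSetup.Γsat ∪ BMatch R.liftC C.enc2 ∪ C.Etrans

end CrsSetup

/-- The transition rules of the automaton `𝒟'(ℛ,𝒮)` over `𝓕`, built from the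
transition rules `Γ'` of `𝒞'_{RS_{𝒮°}}(ℛ)`. -/
def DTransRS {F : Type} {ar : F → ℕ} {Q : Type} (Rg : TRS (F ⊕ F) (arC ar))
    (Γ' : Set (TARule (F ⊕ F) (arC ar) Q)) (enc2 : Term (F ⊕ F) (arC ar) → Q) :
    Set (TARule F ar (Set Q × Set Q)) :=
  { ρ | ∃ (f : F) (SP : Fin (ar f) → Set Q × Set Q) (P1 P2 : Set Q),
      P1 ⊆ (⋃ i : Fin (ar f), oneStep Γ' (Sum.inl f)
              (fun (j : Fin (ar f)) => if j = i then (SP j).2 else (SP j).1)) ∧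
      (∀ (i : Fin (ar f)), ∀ q ∈ (SP i).2,
        (P1 ∩ oneStep Γ' (Sum.inl f) (fun (j : Fin (ar f)) => if j = i then {q} else (SP j).1)).Nonempty) ∧
      ((LhsMatch Rg enc2 (Sum.inl f) (fun i => (SP i).1) ∧ P2.Nonempty ∧
          P2 ⊆ oneStep Γ' (Sum.inr f) (fun i => (SP i).1)) ∨
       (¬ LhsMatch Rg enc2 (Sum.inl f) (fun i => (SP i).1) ∧ P2 = (∅ : Set Q))) ∧
      ρ = ⟨f, SP, (oneStep Γ' (Sum.inl f) (fun i => (SP i).1), P1 ∪ P2)⟩ }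

/-- The automaton `𝒟'(ℛ,𝒮)`: final states are the pairs `[S,P]` with
`S ∩ Q_f' ≠ ∅` and `P ⊆ Q_f`. -/
def DAutomatonRS {F : Type} {ar : F → ℕ} {Q : Type} (Rg : TRS (F ⊕ F) (arC ar))
    (Γ' : Set (TARule (F ⊕ F) (arC ar) Q)) (enc2 : Term (F ⊕ F) (arC ar) → Q)
    (Qf' Qf : Set Q) : TreeAutomaton F ar (Set Q × Set Q) where
  trans := DTransRS Rg Γ' enc2
  final := { SP | (SP.1 ∩ Qf').Nonempty ∧ SP.2 ⊆ Qf }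

/-! The proof goes by induction on `s`, along the `𝒟'`-run. The first component of the
state reached by `s` is exactly `s↓` in `𝒞'`, since `𝒟'` computes `f(S₁,…,Sₙ)↓`. At a
redex `s = f(l₁,…,lₙ)σ` each argument `lᵢσ` reaches `⟪lᵢ⟫` through the copy of `ℬ(ℛ)`
(variables go to `⟪x⟫ = ⟨x⟩` by the propagation rules), so the left-hand side matches and
`P² ⊆ f°(S₁,…,Sₙ)↓ = s°↓` is non-empty. Below the root, the covering condition on `P¹`
lifts a witness for the argument containing `p` through `f`. -/

namespace Term

variable {F : Type} {ar : F → ℕ}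

theorem ground_app_iff {f : F} {ts : Fin (ar f) → Term F ar} :
    (app f ts).Ground ↔ ∀ i, (ts i).Ground := by
  simp only [Ground, vars, Finset.eq_empty_iff_forall_notMem, Finset.mem_biUnion,
    Finset.mem_univ, true_and, not_exists]
  exact forall_comm

theorem subtermAt_append (p q : List ℕ) (t : Term F ar) :
    t.subtermAt (p ++ q) = (t.subtermAt p).bind (·.subtermAt q) := by
  induction p generalizing t with
  | nil => cases t <;> rfl
  | cons i p ih =>
    cases t with
    | var n => rfl
    | app f ts =>
      simp only [List.cons_append, subtermAt]
      split
      · exact ih _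
      · rfl

variable {G : Type} {arG : G → ℕ} (φ : F → G) (h : ∀ f, arG (φ f) = ar f)

theorem relabel_subst (σ : ℕ → Term F ar) (t : Term F ar) :
    (t.subst σ).relabel φ h = (t.relabel φ h).subst fun n => (σ n).relabel φ h := by
  induction t with
  | var n => rfl
  | app f ts ih => simp only [subst, relabel, ih]

theorem Ground.relabel {t : Term F ar} (ht : t.Ground) : (t.relabel φ h).Ground := by
  induction t with
  | var n => exact ht
  | app f ts ih => exact ground_app_iff.2 fun i => ih _ (ground_app_iff.1 ht _)

end Term

section Automata

variable {G : Type} {arG : G → ℕ} {Q : Type}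

theorem mem_SR_of_app_mem {R : TRS G arG} {g : G} {ts : Fin (arG g) → Term G arG}
    (h : Term.app g ts ∈ SR R) (i : Fin (arG g)) : ts i ∈ SR R := by
  obtain ⟨lr, hlr, f, ls, hls, j, p, hp⟩ := h
  refine ⟨lr, hlr, f, ls, hls, j, p ++ [i.val], ?_⟩
  simp only [Term.subtermAt_append, hp, Option.bind_some, Term.subtermAt, i.isLt, dif_pos]

theorem dn_app (Γ : Set (TARule G arG Q)) (g : G) (ts : Fin (arG g) → Term G arG) :
    dn Γ (Term.app g ts) = oneStep Γ g fun i => dn Γ (ts i) := by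
  ext q
  constructor
  · rintro (⟨hts, hρ⟩ : Reaches Γ _ q)
    exact ⟨_, hts, hρ⟩
  · rintro ⟨qs, hqs, hρ⟩
    exact Reaches.app hqs hρ

theorem oneStep_mono (Γ : Set (TARule G arG Q)) (g : G) {Ss Ts : Fin (arG g) → Set Q}
    (h : ∀ i, Ss i ⊆ Ts i) : oneStep Γ g Ss ⊆ oneStep Γ g Ts :=
  fun _ ⟨qs, hqs, hρ⟩ => ⟨qs, fun i => h i (hqs i), hρ⟩

end Automata

namespace DTransRS

variable {F : Type} {ar : F → ℕ} {Q : Type} {Rg : TRS (F ⊕ F) (arC ar)}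
  {Γ' : Set (TARule (F ⊕ F) (arC ar) Q)} {enc2 : Term (F ⊕ F) (arC ar) → Q}
  {f : F} {SP : Fin (ar f) → Set Q × Set Q} {Sst P : Set Q}

theorem fst_eq (hρ : ⟨f, SP, (Sst, P)⟩ ∈ DTransRS Rg Γ' enc2) :
    Sst = oneStep Γ' (Sum.inl f) fun i => (SP i).1 := by
  obtain ⟨_, _, _, _, _, _, _, heq⟩ := hρ
  cases heq
  rfl

theorem exists_mem_snd_of_lhsMatch (hρ : ⟨f, SP, (Sst, P)⟩ ∈ DTransRS Rg Γ' enc2)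
    (hm : LhsMatch Rg enc2 (Sum.inl f) fun i => (SP i).1) :
    ∃ q ∈ P, q ∈ oneStep Γ' (Sum.inr f) fun i => (SP i).1 := by
  obtain ⟨_, _, _, _, _, _, hP2, heq⟩ := hρ
  cases heq
  rcases hP2 with ⟨_, ⟨q, hq⟩, hsub⟩ | ⟨hnm, _⟩
  · exact ⟨q, Or.inr hq, hsub hq⟩
  · exact absurd hm hnm

theorem exists_mem_snd_of_mem_snd (hρ : ⟨f, SP, (Sst, P)⟩ ∈ DTransRS Rg Γ' enc2)
    {i : Fin (ar f)} {q : Q} (hq : q ∈ (SP i).2) :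
    ∃ q' ∈ P, q' ∈ oneStep Γ' (Sum.inl f) fun (j : Fin (ar f)) =>
      if j = i then {q} else (SP j).1 := by
  obtain ⟨_, _, _, _, _, hcover, _, heq⟩ := hρ
  cases heq
  obtain ⟨q', hP1, hq'⟩ := hcover i q hq
  exact ⟨q', Or.inl hP1, hq'⟩

end DTransRS

theorem liftC_app {F : Type} {ar : F → ℕ} (f : F) (ts : Fin (ar f) → Term F ar) :
    liftC (Term.app f ts) = Term.app (Sum.inl f) fun i => liftC (ts i) :=
  rfl

namespace CrsSetup

variable {F : Type} [Fintype F] {ar : F → ℕ} {Q : Type} [Fintype Q] {R S : TRS F ar}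
  (C : CrsSetup Q R S)

theorem Γ0_subset_Γ' : C.Γ0 ⊆ C.Γ' :=
  fun _ hρ => Or.inl (Or.inl (Set.mem_iUnion.2 ⟨0, hρ⟩))

theorem reaches_enc_var (t : Term (F ⊕ F) (arC ar)) (ht : t.Ground) :
    Reaches C.Γ' t (C.enc (Term.var 0)) := by
  induction t with
  | var n => simp [Term.Ground, Term.vars] at ht
  | app g ts ih =>
    exact Reaches.app (fun i => ih i (Term.ground_app_iff.1 ht i))
      (C.Γ0_subset_Γ' (Or.inr (Or.inr ⟨g, rfl⟩)))

theorem reaches_enc2_stPattern {l : Term (F ⊕ F) (arC ar)} (hl : l ∈ SR R.liftC)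
    (σ : ℕ → Term (F ⊕ F) (arC ar)) (hg : (l.subst σ).Ground) :
    Reaches C.Γ' (l.subst σ) (C.enc2 (stPattern l)) := by
  induction l with
  | var n =>
    rw [stPattern, C.hx]
    exact C.reaches_enc_var (σ n) hg
  | app g ls ih =>
    exact Reaches.app
      (fun i => ih i (mem_SR_of_app_mem hl i) (Term.ground_app_iff.1 hg i))
      (Or.inl (Or.inr ⟨g, ls, hl, rfl⟩))

theorem lhsMatch_of_isRedex {f : F} {ts : Fin (ar f) → Term F ar}
    (hg : (Term.app f ts).Ground) (hred : R.IsRedex (Term.app f ts)) :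
    LhsMatch R.liftC C.enc2 (Sum.inl f) fun i => dn C.Γ' (liftC (ts i)) := by
  obtain ⟨⟨l, r⟩, hlr, σ, hσ⟩ := hred
  cases l with
  | var n => exact absurd rfl (R.lhs_not_var _ hlr n)
  | app g ls =>
    obtain ⟨rfl, hts⟩ := Term.app.inj hσ
    cases eq_of_heq hts
    refine ⟨fun i => liftC (ls i), liftC r, ⟨_, hlr, rfl⟩, fun i => ?_⟩
    have hSR : liftC (ls i) ∈ SR R.liftC :=
      ⟨_, ⟨_, hlr, rfl⟩, Sum.inl f, fun j => liftC (ls j), rfl, i, [], Term.subtermAt.eq_1 _⟩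
    have hlift : liftC ((ls i).subst σ) = (liftC (ls i)).subst fun n => liftC (σ n) :=
      Term.relabel_subst _ _ _ _
    change Reaches C.Γ' (liftC ((ls i).subst σ)) _
    rw [hlift]
    refine C.reaches_enc2_stPattern hSR _ ?_
    rw [← hlift]
    exact (Term.ground_app_iff.1 hg i).relabel _ _

theorem fst_eq_dn_of_reaches {s : Term F ar} {Sst P : Set Q}
    (h : Reaches (DTransRS R.liftC C.Γ' C.enc2) s (Sst, P)) :
    Sst = dn C.Γ' (liftC s) := by
  induction s generalizing Sst P with
  | var n => nomatch h
  | app f ts ih =>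
    obtain ⟨hts, hρ⟩ := h
    rw [DTransRS.fst_eq hρ, liftC_app, dn_app]
    congr 1
    funext i
    exact ih i (hts i)

theorem exists_mem_snd_reaches_circTm {f : F} {ts : Fin (ar f) → Term F ar} {Sst P : Set Q}
    (hg : (Term.app f ts).Ground) (hred : R.IsRedex (Term.app f ts))
    (h : Reaches (DTransRS R.liftC C.Γ' C.enc2) (Term.app f ts) (Sst, P)) :
    ∃ q ∈ P, Reaches C.Γ' (circTm (Term.app f ts)) q := by
  rcases h with @⟨_, _, SP, _, hts, hρ⟩
  have hSP : ∀ i, (SP i).1 = dn C.Γ' (liftC (ts i)) := fun i => C.fst_eq_dn_of_reaches (hts i)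
  obtain ⟨q, hqP, hq⟩ := DTransRS.exists_mem_snd_of_lhsMatch hρ
    (by convert C.lhsMatch_of_isRedex hg hred using 2 with i; exact hSP i)
  refine ⟨q, hqP, ?_⟩
  change q ∈ dn C.Γ' (Term.app (Sum.inr f) fun i => liftC (ts i))
  rw [dn_app]
  exact oneStep_mono C.Γ' (Sum.inr f) (fun i => (hSP i).le) hq

theorem exists_replaceAt_cons_of_reaches {f : F} {ts : Fin (ar f) → Term F ar} {Sst P : Set Q}
    (h : Reaches (DTransRS R.liftC C.Γ' C.enc2) (Term.app f ts) (Sst, P))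
    (i : Fin (ar f)) (p : List ℕ) (u : Term (F ⊕ F) (arC ar))
    (harg : ∀ Sᵢ Pᵢ, Reaches (DTransRS R.liftC C.Γ' C.enc2) (ts i) (Sᵢ, Pᵢ) →
      ∃ v, (liftC (ts i)).replaceAt p u = some v ∧ ∃ q ∈ Pᵢ, Reaches C.Γ' v q) :
    ∃ v, (liftC (Term.app f ts)).replaceAt (i.val :: p) u = some v ∧
      ∃ q ∈ P, Reaches C.Γ' v q := by
  obtain ⟨hts, hρ⟩ := h
  obtain ⟨v, hv, qᵢ, hqᵢ, hreach⟩ := harg _ _ (hts i)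
  obtain ⟨q, hqP, hq⟩ := DTransRS.exists_mem_snd_of_mem_snd hρ hqᵢ
  let vs : Fin (ar f) → Term (F ⊕ F) (arC ar) := Function.update (fun j => liftC (ts j)) i v
  refine ⟨Term.app (Sum.inl f) vs, ?_, q, hqP, ?_⟩
  · rw [liftC_app, Term.replaceAt, dif_pos (show (i : ℕ) < arC ar (Sum.inl f) from i.isLt)]
    exact congrArg (Option.map _) hv
  · change q ∈ dn C.Γ' (Term.app (Sum.inl f) vs)
    rw [dn_app C.Γ' (Sum.inl f) vs]
    refine oneStep_mono C.Γ' (Sum.inl f) (fun (j : Fin (ar f)) => ?_) hq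
    by_cases hj : j = i
    · subst hj
      rw [if_pos rfl, show vs j = v from Function.update_self ..]
      exact Set.singleton_subset_iff.2 hreach
    · rw [if_neg hj, C.fst_eq_dn_of_reaches (hts j),
        show vs j = liftC (ts j) from Function.update_of_ne hj ..]

end CrsSetup

theorem statement15_general {F : Type} [Fintype F] {ar : F → ℕ} {Q : Type} [Fintype Q]
    (R S : TRS F ar)
    (C : CrsSetup Q R S)
    (s : Term F ar) (hs : s.Ground) (Sst P : Set Q)
    (h : Reaches (DTransRS R.liftC C.Γ' C.enc2) s (Sst, P))
    (p : List ℕ) (u : Term F ar) (hpu : s.subtermAt p = some u) (hu : R.IsRedex u) :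
    ∃ v, (liftC s).replaceAt p (circTm u) = some v ∧ ∃ q ∈ P, Reaches C.Γ' v q := by
  induction s generalizing Sst P p with
  | var n => nomatch h
  | app f ts ih =>
    cases p with
    | nil =>
      cases Option.some.inj hpu
      exact ⟨_, rfl, C.exists_mem_snd_reaches_circTm hs hu h⟩
    | cons i p =>
      rw [Term.subtermAt] at hpu
      split at hpu
      case isFalse => cases hpu
      case isTrue hi =>
        exact C.exists_replaceAt_cons_of_reaches h ⟨i, hi⟩ p _ fun Sᵢ Pᵢ hᵢ =>
          ih ⟨i, hi⟩ (Term.ground_app_iff.1 hs _) Sᵢ Pᵢ hᵢ p hpu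

/-- Let `ℛ` and `𝒮` be linear growing TRSs over `𝓕` and `𝒟'(ℛ,𝒮)`
the powerset-pair automaton built from `𝒞'_{RS_{𝒮°}}(ℛ)`.  For every `s ∈ 𝒯(𝓕)`: if
`s →_{Γ_{𝒟'}}* [S,P]` then for every redex position `p` of `s` there is a state
`q ∈ P` with `q ∈ s[(s|_p)°]_p↓`. -/
theorem statement15 {F : Type} [Fintype F] {ar : F → ℕ} {Q : Type} [Fintype Q]
    (R S : TRS F ar) (hRlin : R.IsLinear) (hRgrow : R.Growing)
    (hSlin : S.IsLinear) (hSgrow : S.Growing)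
    (C : CrsSetup Q R S)
    (s : Term F ar) (hs : s.Ground) (Sst P : Set Q)
    (h : Reaches (DTransRS R.liftC C.Γ' C.enc2) s (Sst, P))
    (p : List ℕ) (u : Term F ar) (hpu : s.subtermAt p = some u) (hu : R.IsRedex u) :
    ∃ v, (liftC s).replaceAt p (circTm u) = some v ∧ ∃ q ∈ P, Reaches C.Γ' v q :=
  statement15_general R S C s hs Sst P h p u hpu hu
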